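/- Let α > 2, s > 0, D > 0 and P > 0. Then (1/P²) · ∫₀^∞ g·e^{−g/P} · ( 2·∫_D^∞ x·(1 − exp(−s g x^{−α})) dx ) dg = −D² + (2 s^{2/α}/(α P²)) · [ P^{2/α + 2} · (1 + 2/α) · π·csc(2π/α) + I₁(2/α + 2, 1/P, −2/α, s/D^α) ], where I₁(x, y, z, ν) := ∫₀^∞ t^{x−1} e^{−y t} Γ(z, ν t) dt and Γ(a,u) is the real upper incomplete gamma function. (This is the exponent of the Laplace transform of the network interference from full-duplex cells with equal access-point and user transmit powers.) -/

import Mathlib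

/-!
Write β = 2/α. The function x²/2 − (c^β/α)·Γ(−β, c x^{−α}) is a primitive of
x(1 − e^{−c x^{−α}}), and the recurrence Γ(1−β, u) = −βΓ(−β, u) + u^{−β}e^{−u} rewrites it as
x²/2·(1 − e^{−c x^{−α}}) + (c^β/2)·Γ(1−β, c x^{−α}), which tends to (c^β/2)·Γ(1−β) at infinity.
This evaluates the inner integral in closed form. With c = s g the outer integrand becomes a
combination of g^{p−1}e^{−g/P}, whose integral is P^p Γ(p), and of the integrand of
β s^β·I₁(β + 2, 1/P, −β, s/D^α); Euler's reflection formula finally gives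
Γ(1−β)Γ(β+2) = β(β+1)π csc(πβ).
-/

open MeasureTheory Real

/-- The real upper incomplete gamma function Γ(a,u) = ∫_u^∞ t^{a−1} e^{−t} dt. -/
noncomputable def uGamma (a u : ℝ) : ℝ := ∫ t in Set.Ioi u, t ^ (a - 1) * Real.exp (-t)

/-- I₁(x,y,z,ν) = ∫₀^∞ t^{x−1} e^{−yt} Γ(z, νt) dt. -/
noncomputable def I1 (x y z ν : ℝ) : ℝ :=
  ∫ t in Set.Ioi (0 : ℝ), t ^ (x - 1) * Real.exp (-(y * t)) * uGamma z (ν * t)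

open Set Filter Topology Asymptotics

lemma integrableOn_rpow_mul_exp_neg_Ioi (a : ℝ) {u : ℝ} (hu : 0 < u) :
    IntegrableOn (fun t : ℝ => t ^ (a - 1) * exp (-t)) (Ioi u) := by
  refine integrable_of_isBigO_exp_neg one_half_pos (fun t ht => ?_) ?_
  · exact ((continuousAt_rpow_const t _ (Or.inl (hu.trans_le ht).ne')).mul
      (continuous_exp.comp continuous_neg).continuousAt).continuousWithinAt
  · have hlim := tendsto_rpow_mul_exp_neg_mul_atTop_nhds_zero (a - 1) (1 / 2) one_half_pos
    refine ((hlim.isBigO_one ℝ).mul (isBigO_refl (fun t : ℝ => exp (-(1 / 2) * t)) atTop)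
      |>.congr_left fun t => ?_).congr_right fun t => one_mul _
    rw [mul_assoc, ← exp_add]
    ring_nf

lemma uGamma_nonneg (a : ℝ) {u : ℝ} (hu : 0 ≤ u) : 0 ≤ uGamma a u :=
  setIntegral_nonneg measurableSet_Ioi fun t ht => by
    have : 0 ≤ t := hu.trans (le_of_lt ht)
    positivity

lemma uGamma_antitoneOn (a : ℝ) : AntitoneOn (uGamma a) (Ioi 0) := fun u hu v _ huv =>
  setIntegral_mono_set (integrableOn_rpow_mul_exp_neg_Ioi a hu)
    (ae_restrict_of_forall_mem measurableSet_Ioi fun t ht => by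
      have : 0 ≤ t := le_of_lt (lt_trans hu ht)
      positivity)
    (Ioi_subset_Ioi huv).eventuallyLE

lemma hasDerivAt_uGamma (a : ℝ) {u : ℝ} (hu : 0 < u) :
    HasDerivAt (uGamma a) (-(u ^ (a - 1) * exp (-u))) u := by
  set f : ℝ → ℝ := fun t => t ^ (a - 1) * exp (-t)
  have hcont : ∀ t, 0 < t → ContinuousAt f t := fun t ht =>
    (continuousAt_rpow_const t _ (Or.inl ht.ne')).mul
      (continuous_exp.comp continuous_neg).continuousAt
  have hmeas : StronglyMeasurableAtFilter f (𝓝 u) :=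
    ⟨Ioi 0, Ioi_mem_nhds hu, ContinuousOn.aestronglyMeasurable
      (fun t ht => (hcont t ht).continuousWithinAt) measurableSet_Ioi⟩
  have hint : ∀ v, 0 < v → IntegrableOn f (Ioi v) := fun v hv =>
    integrableOn_rpow_mul_exp_neg_Ioi a hv
  have hIoc : IntervalIntegrable f volume u (u + 1) :=
    (intervalIntegrable_iff_integrableOn_Ioc_of_le (by linarith)).2
      ((hint u hu).mono_set Ioc_subset_Ioi_self)
  refine ((intervalIntegral.integral_hasDerivAt_left hIoc hmeas (hcont u hu)).add_const
    (uGamma a (u + 1))).congr_of_eventuallyEq ?_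
  filter_upwards [Ioi_mem_nhds hu] with v hv
  exact (intervalIntegral.integral_interval_add_Ioi (hint v hv) (hint _ (by linarith))).symm

lemma tendsto_uGamma_nhdsGT_zero {a : ℝ} (ha : 0 < a) :
    Tendsto (uGamma a) (𝓝[>] 0) (𝓝 (Gamma a)) := by
  set f : ℝ → ℝ := fun t => t ^ (a - 1) * exp (-t)
  have hf : IntegrableOn f (Ioi 0) :=
    (GammaIntegral_convergent ha).congr_fun (fun t _ => mul_comm _ _) measurableSet_Ioi
  have hΓ : Gamma a = ∫ t in Ioi 0, f t := by
    rw [Gamma_eq_integral ha]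
    exact setIntegral_congr_fun measurableSet_Ioi fun t _ => mul_comm _ _
  have hprim : ContinuousWithinAt (fun u => ∫ t in (0 : ℝ)..u, f t) (Icc 0 1) 0 :=
    intervalIntegral.continuousWithinAt_primitive (measure_singleton 0) (by
      simpa using (intervalIntegrable_iff_integrableOn_Ioc_of_le zero_le_one).2
        (hf.mono_set Ioc_subset_Ioi_self))
  have hlim :=
    (hprim.tendsto.mono_left (nhdsWithin_le_of_mem (Icc_mem_nhdsGT one_pos))).const_sub (Gamma a)
  simp only [intervalIntegral.integral_same, sub_zero] at hlim
  refine hlim.congr' (eventually_nhdsWithin_of_forall fun u hu => ?_)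
  rw [hΓ, ← intervalIntegral.integral_Ioi_sub_Ioi hf (le_of_lt hu), sub_sub_cancel]
  rfl

lemma uGamma_add_one (a : ℝ) {u : ℝ} (hu : 0 < u) :
    uGamma (a + 1) u = a * uGamma a u + u ^ a * exp (-u) := by
  have hderiv : ∀ x ∈ Ici u, HasDerivAt (fun t : ℝ => -(t ^ a * exp (-t)))
      (x ^ (a + 1 - 1) * exp (-x) - a * (x ^ (a - 1) * exp (-x))) x := by
    intro x hx
    have hx0 : 0 < x := hu.trans_le hx
    refine ((hasDerivAt_rpow_const (p := a) (Or.inl hx0.ne')).mul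
      (hasDerivAt_neg x).exp).neg.congr_deriv ?_
    rw [add_sub_cancel_right]
    ring
  have hlim : Tendsto (fun t : ℝ => -(t ^ a * exp (-t))) atTop (𝓝 0) := by
    simpa using (tendsto_rpow_mul_exp_neg_mul_atTop_nhds_zero a 1 one_pos).neg
  have hint := fun b => integrableOn_rpow_mul_exp_neg_Ioi b hu
  have hFTC :=
    integral_Ioi_of_hasDerivAt_of_tendsto' hderiv ((hint _).sub ((hint a).const_mul a)) hlim
  rw [integral_sub (hint _) ((hint a).const_mul a), integral_const_mul] at hFTC
  simp only [uGamma] at hFTC ⊢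
  linarith

lemma uGamma_neg_le_rpow_div {b u : ℝ} (hb : 0 < b) (hu : 0 < u) :
    uGamma (-b) u ≤ u ^ (-b) / b := calc
  uGamma (-b) u ≤ ∫ t in Ioi u, t ^ (-b - 1) :=
    setIntegral_mono_on (integrableOn_rpow_mul_exp_neg_Ioi _ hu)
      (integrableOn_Ioi_rpow_of_lt (by linarith) hu) measurableSet_Ioi fun t ht =>
        mul_le_of_le_one_right (rpow_nonneg (hu.trans ht).le _)
          (exp_le_one_iff.2 (by linarith [hu.trans ht]))
  _ = u ^ (-b) / b := by
    rw [integral_Ioi_rpow_of_lt (by linarith) hu, sub_add_cancel, div_neg, neg_div, neg_neg]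

lemma integrableOn_rpow_mul_exp_neg_mul {a r : ℝ} (ha : 0 < a) (hr : 0 < r) :
    IntegrableOn (fun t : ℝ => t ^ (a - 1) * exp (-(r * t))) (Ioi 0) :=
  (integrableOn_rpow_mul_exp_neg_mul_rpow (s := a - 1) (by linarith) one_pos hr).congr_fun
    (fun t _ => by simp only [rpow_one, neg_mul]) measurableSet_Ioi

lemma integrableOn_rpow_mul_exp_neg_mul_mul_uGamma_neg {x y b ν : ℝ} (hb : 0 < b) (hbx : b < x)
    (hy : 0 < y) (hν : 0 < ν) :
    IntegrableOn (fun t : ℝ => t ^ (x - 1) * exp (-(y * t)) * uGamma (-b) (ν * t)) (Ioi 0) := by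
  refine ((integrableOn_rpow_mul_exp_neg_mul (sub_pos.2 hbx) hy).const_mul (ν ^ (-b) / b)).mono'
    ?_ (ae_restrict_of_forall_mem measurableSet_Ioi fun t (ht : 0 < t) => ?_)
  · refine (ContinuousOn.aemeasurable (fun t (ht : 0 < t) => ?_) measurableSet_Ioi).mul
      (aemeasurable_restrict_of_antitoneOn measurableSet_Ioi fun u hu v _ huv =>
        uGamma_antitoneOn _ (mul_pos hν hu) (mul_pos hν (lt_of_lt_of_le hu huv))
          (by gcongr)) |>.aestronglyMeasurable
    exact ((continuousAt_rpow_const t _ (Or.inl ht.ne')).mul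
      (continuous_exp.comp (continuous_const.mul continuous_id).neg).continuousAt)
      |>.continuousWithinAt
  · have hνt : 0 < ν * t := mul_pos hν ht
    rw [norm_of_nonneg (mul_nonneg (by positivity) (uGamma_nonneg _ hνt.le))]
    calc t ^ (x - 1) * exp (-(y * t)) * uGamma (-b) (ν * t)
        ≤ t ^ (x - 1) * exp (-(y * t)) * ((ν * t) ^ (-b) / b) :=
          mul_le_mul_of_nonneg_left (uGamma_neg_le_rpow_div hb hνt) (by positivity)
      _ = ν ^ (-b) / b * (t ^ (x - b - 1) * exp (-(y * t))) := by
          rw [mul_rpow hν.le ht.le, show x - b - 1 = (x - 1) + -b by ring, rpow_add ht]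
          ring

lemma mul_rpow_neg_rpow_neg_two_div {α c x : ℝ} (hα : α ≠ 0) (hc : 0 ≤ c) (hx : 0 < x) :
    (c * x ^ (-α)) ^ (-(2 / α)) = c ^ (-(2 / α)) * x ^ 2 := by
  rw [mul_rpow hc (rpow_nonneg hx.le _), ← rpow_mul hx.le, neg_mul_neg, mul_div_cancel₀ _ hα,
    rpow_two]

lemma hasDerivAt_sq_div_two_sub_uGamma {α c x : ℝ} (hα : α ≠ 0) (hc : 0 < c) (hx : 0 < x) :
    HasDerivAt (fun x : ℝ => x ^ 2 / 2 - c ^ (2 / α) / α * uGamma (-(2 / α)) (c * x ^ (-α)))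
      (x * (1 - exp (-(c * x ^ (-α))))) x := by
  have hu : HasDerivAt (fun x : ℝ => c * x ^ (-α)) (c * (-α * x ^ (-α - 1))) x :=
    (hasDerivAt_rpow_const (Or.inl hx.ne')).const_mul c
  have hupos : 0 < c * x ^ (-α) := by positivity
  refine (((hasDerivAt_pow 2 x).div_const 2).sub
    (((hasDerivAt_uGamma _ hupos).comp x hu).const_mul _)).congr_deriv ?_
  rw [rpow_sub_one hupos.ne', mul_rpow_neg_rpow_neg_two_div hα hc.le hx, rpow_sub_one hx.ne',
    rpow_neg hc.le]
  have : c ^ (2 / α) ≠ 0 := by positivity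
  field_simp
  ring

lemma integrableOn_mul_one_sub_exp_neg_mul_rpow_neg {α c D : ℝ} (hα : 2 < α) (hc : 0 ≤ c)
    (hD : 0 < D) : IntegrableOn (fun x : ℝ => x * (1 - exp (-(c * x ^ (-α))))) (Ioi D) := by
  refine ((integrableOn_Ioi_rpow_of_lt (by linarith : 1 - α < -1) hD).const_mul c).mono' ?_
    (ae_restrict_of_forall_mem measurableSet_Ioi fun x (hx : D < x) => ?_)
  · refine ContinuousOn.aestronglyMeasurable (fun x (hx : D < x) => ?_) measurableSet_Ioi
    exact (continuousAt_id.mul (continuousAt_const.sub (continuous_exp.continuousAt.comp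
      (continuousAt_const.mul (continuousAt_rpow_const x _
        (Or.inl (hD.trans hx).ne'))).neg))).continuousWithinAt
  · have hx0 : 0 < x := hD.trans hx
    have hu : 0 ≤ c * x ^ (-α) := by positivity
    rw [norm_of_nonneg (mul_nonneg hx0.le (by simpa using exp_le_one_iff.2 (neg_nonpos.2 hu)))]
    calc x * (1 - exp (-(c * x ^ (-α)))) ≤ x * (c * x ^ (-α)) :=
          mul_le_mul_of_nonneg_left (by linarith [one_sub_le_exp_neg (c * x ^ (-α))]) hx0.le
      _ = c * x ^ (1 - α) := by rw [sub_eq_add_neg, rpow_add hx0, rpow_one]; ring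

lemma tendsto_sq_div_two_sub_uGamma_atTop {α c : ℝ} (hα : 2 < α) (hc : 0 < c) :
    Tendsto (fun x : ℝ => x ^ 2 / 2 - c ^ (2 / α) / α * uGamma (-(2 / α)) (c * x ^ (-α))) atTop
      (𝓝 (c ^ (2 / α) / 2 * Gamma (1 - 2 / α))) := by
  have hα0 : 0 < α := by linarith
  have hu : Tendsto (fun x : ℝ => c * x ^ (-α)) atTop (𝓝[>] 0) :=
    tendsto_nhdsWithin_of_tendsto_nhds_of_eventually_within _
      (by simpa using (tendsto_rpow_neg_atTop hα0).const_mul c)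
      (eventually_gt_atTop 0 |>.mono fun x hx => mem_Ioi.2 (by positivity))
  have hfirst : Tendsto (fun x : ℝ => x ^ 2 / 2 * (1 - exp (-(c * x ^ (-α))))) atTop (𝓝 0) := by
    refine tendsto_of_tendsto_of_tendsto_of_le_of_le' tendsto_const_nhds
      (by simpa using ((tendsto_rpow_neg_atTop (by linarith : 0 < α - 2)).const_mul (c / 2)))
      ?_ ?_
    · filter_upwards [eventually_gt_atTop 0] with x hx
      have : 0 ≤ c * x ^ (-α) := by positivity
      exact mul_nonneg (by positivity) (by simpa using exp_le_one_iff.2 (neg_nonpos.2 this))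
    · filter_upwards [eventually_gt_atTop 0] with x hx
      calc x ^ 2 / 2 * (1 - exp (-(c * x ^ (-α)))) ≤ x ^ 2 / 2 * (c * x ^ (-α)) :=
            mul_le_mul_of_nonneg_left (by linarith [one_sub_le_exp_neg (c * x ^ (-α))])
              (by positivity)
        _ = c / 2 * x ^ (2 - α) := by rw [sub_eq_add_neg, rpow_add hx, rpow_two]; ring
  have hsecond := ((tendsto_uGamma_nhdsGT_zero (by
    rw [sub_pos, div_lt_one hα0]; exact hα)).comp hu).const_mul (c ^ (2 / α) / 2)
  refine (zero_add (c ^ (2 / α) / 2 * Gamma (1 - 2 / α)) ▸ hfirst.add hsecond).congr' ?_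
  filter_upwards [eventually_gt_atTop 0] with x hx
  have hrec := uGamma_add_one (-(2 / α)) (by positivity : 0 < c * x ^ (-α))
  rw [mul_rpow_neg_rpow_neg_two_div hα0.ne' hc.le hx, neg_add_eq_sub] at hrec
  simp only [Function.comp_apply, hrec, rpow_neg hc.le]
  have : c ^ (2 / α) ≠ 0 := by positivity
  field_simp
  ring

lemma integral_Ioi_mul_one_sub_exp_neg_mul_rpow_neg {α c D : ℝ} (hα : 2 < α) (hc : 0 < c)
    (hD : 0 < D) :
    ∫ x in Ioi D, x * (1 - exp (-(c * x ^ (-α)))) = c ^ (2 / α) / 2 * Gamma (1 - 2 / α)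
      - D ^ 2 / 2 + c ^ (2 / α) / α * uGamma (-(2 / α)) (c * D ^ (-α)) := by
  rw [integral_Ioi_of_hasDerivAt_of_tendsto'
    (fun x hx => hasDerivAt_sq_div_two_sub_uGamma (by linarith) hc (hD.trans_le hx))
    (integrableOn_mul_one_sub_exp_neg_mul_rpow_neg hα hc.le hD)
    (tendsto_sq_div_two_sub_uGamma_atTop hα hc)]
  ring

lemma Gamma_one_sub_mul_Gamma_add_two {β : ℝ} (h0 : β ≠ 0) (h1 : β + 1 ≠ 0) :
    Gamma (1 - β) * Gamma (β + 2) = β * (β + 1) * π / sin (π * β) := by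
  rw [show β + 2 = β + 1 + 1 by ring, Gamma_add_one h1, Gamma_add_one h0,
    mul_div_assoc, ← Gamma_mul_Gamma_one_sub]
  ring

lemma laplace_exponent_integrand_eq {α s D P g : ℝ} (hα : 2 < α) (hs : 0 < s) (hD : 0 < D)
    (hg : 0 < g) :
    g * exp (-(g / P)) * (2 * ∫ x in Ioi D, x * (1 - exp (-(s * g * x ^ (-α)))))
      = s ^ (2 / α) * Gamma (1 - 2 / α) * (g ^ (2 / α + 2 - 1) * exp (-(1 / P * g)))
        - D ^ 2 * (g ^ ((2 : ℝ) - 1) * exp (-(1 / P * g)))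
        + 2 / α * s ^ (2 / α) *
          (g ^ (2 / α + 2 - 1) * exp (-(1 / P * g)) * uGamma (-(2 / α)) (s / D ^ α * g)) := by
  rw [integral_Ioi_mul_one_sub_exp_neg_mul_rpow_neg hα (by positivity) hD, mul_rpow hs.le hg.le,
    show s * g * D ^ (-α) = s / D ^ α * g by rw [rpow_neg hD.le]; ring,
    show 2 / α + 2 - 1 = 2 / α + 1 by ring, rpow_add_one hg.ne', show (2 : ℝ) - 1 = 1 by norm_num,
    rpow_one, one_div_mul_eq_div]
  ring

/-- Laplace-transform exponent of the FD-cell interference, equal powers. -/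
theorem laplace_exponent_FD_equal_powers (α s D P : ℝ) (hα : 2 < α) (hs : 0 < s)
    (hD : 0 < D) (hP : 0 < P) :
    (1 / P ^ 2) * ∫ g in Set.Ioi (0 : ℝ),
        g * Real.exp (-(g / P)) *
        (2 * ∫ x in Set.Ioi D, x * (1 - Real.exp (-(s * g * x ^ (-α)))))
      = -D ^ 2 + (2 * s ^ (2 / α) / (α * P ^ 2)) *
        (P ^ (2 / α + 2) * (1 + 2 / α) * Real.pi * (Real.sin (2 * Real.pi / α))⁻¹
          + I1 (2 / α + 2) (1 / P) (-(2 / α)) (s / D ^ α)) := by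
  have hα0 : 0 < α := by linarith
  have hP' : 0 < 1 / P := by positivity
  have hint₁ := integrableOn_rpow_mul_exp_neg_mul (by positivity : 0 < 2 / α + 2) hP'
  have hint₂ := integrableOn_rpow_mul_exp_neg_mul two_pos hP'
  have hint₃ := integrableOn_rpow_mul_exp_neg_mul_mul_uGamma_neg (x := 2 / α + 2) (b := 2 / α)
    (by positivity) (by linarith) hP' (by positivity : 0 < s / D ^ α)
  rw [setIntegral_congr_fun measurableSet_Ioi fun g hg =>
      laplace_exponent_integrand_eq hα hs hD hg,
    integral_add (f := fun g => _ - _) ((hint₁.const_mul _).sub (hint₂.const_mul _))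
      (hint₃.const_mul _),
    integral_sub (hint₁.const_mul _) (hint₂.const_mul _), integral_const_mul, integral_const_mul,
    integral_const_mul, integral_rpow_mul_exp_neg_mul_Ioi (by positivity) hP',
    integral_rpow_mul_exp_neg_mul_Ioi two_pos hP', one_div_one_div, Gamma_two, rpow_two,
    mul_mul_mul_comm, Gamma_one_sub_mul_Gamma_add_two (by positivity) (by positivity),
    show 2 * π / α = π * (2 / α) by ring]
  change _ * (_ - _ + _ * I1 (2 / α + 2) (1 / P) (-(2 / α)) (s / D ^ α)) = _
  field_simp
  ring
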